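/- arXiv:2503.18676 — 2 statements merged into one kernel-verified Lean document; each statement's English description precedes it below -/
import Mathlib

section
/- (Bernstein-type inequality.) Let g* ∈ L^∞([-1,1]) and define the shallow sigmoid-net operator G*_{n,g*}(t) = ∑_{k=0}^{4n} β_k φ(nt - k + 2n), where β_k = g*(-1) for 0 ≤ k ≤ n-1, β_k = g*((k-2n)/n) for n ≤ k ≤ 3n, and β_k = g*(1) for 3n+1 ≤ k ≤ 4n, and φ(t) = (σ(t+1)-σ(t-1))/2 with σ the logistic sigmoid. Then there is a constant C independent of n and g* such that |d/dt G*_{n,g*}(t)| ≤ C n ‖g*‖_{L^∞([-1,1])} for all t ∈ [-1,1]. -/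
open Set

noncomputable def sigmoid (t : ℝ) : ℝ := 1 / (1 + Real.exp (-t))

noncomputable def phi (t : ℝ) : ℝ := (sigmoid (t + 1) - sigmoid (t - 1)) / 2

noncomputable def beta (n : ℕ) (g : ℝ → ℝ) (k : ℕ) : ℝ :=
  if k ≤ n - 1 then g (-1)
  else if k ≤ 3 * n then g (((k : ℝ) - 2 * n) / n)
  else g 1

noncomputable def Gop (n : ℕ) (g : ℝ → ℝ) (t : ℝ) : ℝ :=
  ∑ k ∈ Finset.range (4 * n + 1), beta n g k * phi ((n : ℝ) * t - (k : ℝ) + 2 * n)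

noncomputable def sig' (s : ℝ) : ℝ := Real.exp (-s) / (1 + Real.exp (-s))^2

noncomputable def phi' (t : ℝ) : ℝ := (sig' (t + 1) - sig' (t - 1)) / 2

lemma hasDerivAt_sigmoid (t : ℝ) : HasDerivAt sigmoid (sig' t) t := by
  have h1 : HasDerivAt (fun s : ℝ => -s) (-1) t := (hasDerivAt_id t).neg
  have h2 : HasDerivAt (fun s : ℝ => Real.exp (-s)) (-Real.exp (-t)) t := by
    simpa [Function.comp_def] using (Real.hasDerivAt_exp (-t)).comp t h1
  have h3 : HasDerivAt (fun s : ℝ => 1 + Real.exp (-s)) (-Real.exp (-t)) t :=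
    h2.const_add 1
  have hne : 1 + Real.exp (-t) ≠ 0 := by positivity
  have h4 := h3.inv hne
  have heq : sigmoid = fun s : ℝ => (1 + Real.exp (-s))⁻¹ := by
    funext s; simp [sigmoid, one_div]
  rw [heq]
  simpa [sig', neg_neg, div_eq_mul_inv, Pi.inv_def] using h4

lemma sig'_nonneg (s : ℝ) : 0 ≤ sig' s := by
  unfold sig'; positivity

lemma sig'_le (s : ℝ) : sig' s ≤ Real.exp (-|s|) := by
  unfold sig'
  have ha : (0:ℝ) < Real.exp (-s) := Real.exp_pos _
  have hb : (0:ℝ) < Real.exp s := Real.exp_pos _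
  have hab : Real.exp s * Real.exp (-s) = 1 := by
    rw [← Real.exp_add]; simp
  have hpos : (0:ℝ) < (1 + Real.exp (-s))^2 := by positivity
  rcases le_or_gt 0 s with h | h
  · rw [abs_of_nonneg h, div_le_iff₀ hpos]
    nlinarith [ha.le]
  · rw [abs_of_neg h, neg_neg, div_le_iff₀ hpos]
    nlinarith [ha.le, hb.le]

theorem dummy : True := trivial

lemma hasDerivAt_phi (t : ℝ) : HasDerivAt phi (phi' t) t := by
  have h1 : HasDerivAt (fun s : ℝ => sigmoid (s + 1)) (sig' (t + 1)) t := by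
    simpa [Function.comp_def] using (hasDerivAt_sigmoid (t + 1)).comp t ((hasDerivAt_id t).add_const 1)
  have h2 : HasDerivAt (fun s : ℝ => sigmoid (s - 1)) (sig' (t - 1)) t := by
    simpa [Function.comp_def] using (hasDerivAt_sigmoid (t - 1)).comp t ((hasDerivAt_id t).sub_const 1)
  have := (h1.sub h2).div_const 2
  exact this

lemma phi'_bound (t : ℝ) : |phi' t| ≤ Real.exp 1 * Real.exp (-|t|) := by
  have b1 : sig' (t + 1) ≤ Real.exp 1 * Real.exp (-|t|) := by
    calc sig' (t + 1) ≤ Real.exp (-|t + 1|) := sig'_le _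
      _ ≤ Real.exp (1 - |t|) := by
          apply Real.exp_le_exp.2
          have := abs_sub_abs_le_abs_sub t (-1)
          simp only [sub_neg_eq_add, abs_neg, abs_one] at this
          linarith [this]
      _ = Real.exp 1 * Real.exp (-|t|) := by rw [← Real.exp_add]; ring_nf
  have b2 : sig' (t - 1) ≤ Real.exp 1 * Real.exp (-|t|) := by
    calc sig' (t - 1) ≤ Real.exp (-|t - 1|) := sig'_le _
      _ ≤ Real.exp (1 - |t|) := by
          apply Real.exp_le_exp.2
          have := abs_sub_abs_le_abs_sub t 1
          rw [abs_one] at this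
          linarith [this]
      _ = Real.exp 1 * Real.exp (-|t|) := by rw [← Real.exp_add]; ring_nf
  have n1 := sig'_nonneg (t + 1)
  have n2 := sig'_nonneg (t - 1)
  rw [phi', abs_div, abs_of_nonneg (by norm_num : (0:ℝ) ≤ 2)]
  rw [div_le_iff₀ (by norm_num : (0:ℝ) < 2)]
  rw [abs_sub_le_iff]
  constructor <;> nlinarith [Real.exp_pos (-|t|), Real.exp_pos (1:ℝ)]

lemma sum_exp_le (N : ℕ) (x : ℝ) :
    ∑ k ∈ Finset.range N, Real.exp (-|x - k|) ≤
      Real.exp 1 * (2 * (1 - Real.exp (-1))⁻¹) := by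
  set r : ℝ := Real.exp (-1) with hr
  have hr0 : 0 < r := Real.exp_pos _
  have hr1 : r < 1 := Real.exp_lt_one_iff.2 (by norm_num)
  set m : ℤ := ⌊x⌋ with hm
  have step1 : ∀ k : ℕ, Real.exp (-|x - k|) ≤ Real.exp 1 * r ^ (m - k).natAbs := by
    intro k
    have h1 : |(m:ℝ) - k| ≤ |x - k| + 1 := by
      have hfl : |x - m| < 1 := by
        rw [abs_of_nonneg (by linarith [Int.floor_le x])]
        linarith [Int.lt_floor_add_one x]
      calc |(m:ℝ) - k| = |(x - k) - (x - m)| := by ring_nf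
        _ ≤ |x - k| + |x - m| := abs_sub _ _
        _ ≤ |x - k| + 1 := by linarith
    have h2 : ((m - (k:ℤ)).natAbs : ℝ) = |(m:ℝ) - k| := by
      rw [Nat.cast_natAbs]
      push_cast
      rfl
    have h3 : Real.exp 1 * r ^ (m - k).natAbs = Real.exp (1 - ((m - (k:ℤ)).natAbs : ℝ)) := by
      rw [hr, ← Real.exp_nat_mul]
      rw [← Real.exp_add]
      ring_nf
    rw [h3, h2]
    apply Real.exp_le_exp.2
    linarith
  calc ∑ k ∈ Finset.range N, Real.exp (-|x - k|)
      ≤ ∑ k ∈ Finset.range N, Real.exp 1 * r ^ (m - k).natAbs :=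
        Finset.sum_le_sum fun k _ => step1 k
    _ = Real.exp 1 * ∑ k ∈ Finset.range N, r ^ (m - k).natAbs := by
        rw [Finset.mul_sum]
    _ ≤ Real.exp 1 * (2 * (1 - r)⁻¹) := by
        apply mul_le_mul_of_nonneg_left _ (Real.exp_pos 1).le
        have hsplit : (Finset.range N) =
            ((Finset.range N).filter (fun k : ℕ => (k:ℤ) ≤ m)) ∪
            ((Finset.range N).filter (fun k : ℕ => ¬ (k:ℤ) ≤ m)) := by
          rw [Finset.filter_union_filter_not_eq]
        have key : ∀ s : Finset ℕ, (∀ k1 ∈ s, ∀ k2 ∈ s, (m - k1).natAbs = (m - k2).natAbs → k1 = k2) →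
            ∑ k ∈ s, r ^ (m - k).natAbs ≤ (1 - r)⁻¹ := by
          intro s hinj
          have : ∑ k ∈ s, r ^ (m - k).natAbs = ∑ j ∈ s.image (fun k : ℕ => (m - (k:ℤ)).natAbs), r ^ j := by
            rw [Finset.sum_image hinj]
          rw [this]
          have hsummable : Summable (fun j : ℕ => r ^ j) := summable_geometric_of_lt_one hr0.le hr1
          calc ∑ j ∈ s.image (fun k : ℕ => (m - (k:ℤ)).natAbs), r ^ j
              ≤ ∑' j : ℕ, r ^ j := Summable.sum_le_tsum _ (fun j _ => by positivity) hsummable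
            _ = (1 - r)⁻¹ := tsum_geometric_of_lt_one hr0.le hr1
        rw [hsplit, Finset.sum_union (Finset.disjoint_filter_filter_not _ _ _)]
        have b1 := key ((Finset.range N).filter (fun k : ℕ => (k:ℤ) ≤ m)) (by
          intro k1 h1 k2 h2 he
          simp only [Finset.mem_filter] at h1 h2
          omega)
        have b2 := key ((Finset.range N).filter (fun k : ℕ => ¬ (k:ℤ) ≤ m)) (by
          intro k1 h1 k2 h2 he
          simp only [Finset.mem_filter] at h1 h2
          omega)
        linarith

noncomputable def Gop' (n : ℕ) (g : ℝ → ℝ) (t : ℝ) : ℝ :=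
  ∑ k ∈ Finset.range (4 * n + 1), beta n g k * (phi' ((n : ℝ) * t - (k : ℝ) + 2 * n) * n)

lemma hasDerivAt_Gop (n : ℕ) (g : ℝ → ℝ) (t : ℝ) :
    HasDerivAt (Gop n g) (Gop' n g t) t := by
  have : HasDerivAt (fun t => ∑ k ∈ Finset.range (4 * n + 1),
      beta n g k * phi ((n : ℝ) * t - (k : ℝ) + 2 * n)) (Gop' n g t) t := by
    apply HasDerivAt.fun_sum
    intro k hk
    have hinner : HasDerivAt (fun t : ℝ => (n:ℝ) * t - (k:ℝ) + 2 * n) (n:ℝ) t := by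
      simpa using (((hasDerivAt_id t).const_mul (n:ℝ)).sub_const (k:ℝ)).add_const (2*(n:ℝ))
    exact ((hasDerivAt_phi _).comp t hinner).const_mul _
  exact this.congr_deriv rfl

lemma beta_bound (n : ℕ) (hn : 0 < n) (g : ℝ → ℝ) (M : ℝ)
    (hg : ∀ t ∈ Icc (-1 : ℝ) 1, |g t| ≤ M) (k : ℕ) : |beta n g k| ≤ M := by
  unfold beta
  split_ifs with h1 h2
  · exact hg (-1) (by norm_num)
  · apply hg
    have hk : n ≤ k := by omega
    have hn' : (0:ℝ) < n := by exact_mod_cast hn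
    constructor
    · rw [le_div_iff₀ hn']
      push_cast
      have : (n:ℝ) ≤ k := by exact_mod_cast hk
      linarith
    · rw [div_le_iff₀ hn']
      have : (k:ℝ) ≤ 3 * n := by exact_mod_cast h2
      linarith
  · exact hg 1 (by norm_num)

theorem bernstein_inequality :
    ∃ C : ℝ, 0 < C ∧ ∀ n : ℕ, 0 < n → ∀ g : ℝ → ℝ, ∀ M : ℝ,
      (∀ t ∈ Icc (-1 : ℝ) 1, |g t| ≤ M) →
      ∀ t ∈ Icc (-1 : ℝ) 1, |deriv (Gop n g) t| ≤ C * n * M := by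
  refine ⟨Real.exp 1 * (Real.exp 1 * (2 * (1 - Real.exp (-1))⁻¹)), ?_, ?_⟩
  · have h1 : (0:ℝ) < (1 - Real.exp (-1))⁻¹ :=
      inv_pos.2 (by linarith [Real.exp_lt_one_iff.2 (by norm_num : (-1:ℝ) < 0)])
    exact mul_pos (Real.exp_pos 1) (mul_pos (Real.exp_pos 1) (by linarith))
  · intro n hn g M hg t ht
    have hM : 0 ≤ M := le_trans (abs_nonneg _) (hg (-1) (by norm_num))
    rw [(hasDerivAt_Gop n g t).deriv]
    unfold Gop'
    set x : ℝ := (n:ℝ) * t + 2 * n with hx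
    calc |∑ k ∈ Finset.range (4 * n + 1), beta n g k * (phi' ((n : ℝ) * t - (k : ℝ) + 2 * n) * n)|
        ≤ ∑ k ∈ Finset.range (4 * n + 1), |beta n g k * (phi' ((n : ℝ) * t - (k : ℝ) + 2 * n) * n)| :=
          Finset.abs_sum_le_sum_abs _ _
      _ ≤ ∑ k ∈ Finset.range (4 * n + 1), M * (Real.exp 1 * Real.exp (-|x - k|)) * n := by
          apply Finset.sum_le_sum
          intro k hk
          rw [abs_mul, abs_mul]
          have e1 : (n:ℝ) * t - (k:ℝ) + 2 * n = x - k := by rw [hx]; ring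
          rw [e1]
          have hb := beta_bound n hn g M hg k
          have hp := phi'_bound (x - k)
          have hnn : |(n:ℝ)| = (n:ℝ) := abs_of_nonneg (by positivity)
          rw [hnn, ← mul_assoc]
          apply mul_le_mul_of_nonneg_right _ (by positivity : (0:ℝ) ≤ (n:ℝ))
          exact mul_le_mul hb hp (abs_nonneg _) hM
      _ = M * Real.exp 1 * n * ∑ k ∈ Finset.range (4 * n + 1), Real.exp (-|x - k|) := by
          rw [Finset.mul_sum]; apply Finset.sum_congr rfl; intros; ring
      _ ≤ M * Real.exp 1 * n * (Real.exp 1 * (2 * (1 - Real.exp (-1))⁻¹)) := by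
          apply mul_le_mul_of_nonneg_left (sum_exp_le _ _)
          have := Real.exp_pos 1
          positivity
      _ = Real.exp 1 * (Real.exp 1 * (2 * (1 - Real.exp (-1))⁻¹)) * n * M := by ring
end

section
/- (Direct approximation theorem for the univariate operator.) Let g* : [-1,1] → ℝ be bounded, and let G*_{n,g*}(t) = ∑_{k=0}^{4n} β_k φ(nt - k + 2n) with β_k = g*(-1) for 0 ≤ k ≤ n-1, β_k = g*((k-2n)/n) for n ≤ k ≤ 3n, β_k = g*(1) for 3n+1 ≤ k ≤ 4n, and φ(t) = (σ(t+1)-σ(t-1))/2 for the logistic sigmoid σ. If g* is α-Lipschitz with constant c on [-1,1] for some 0 < α ≤ 1, then there is a constant C (independent of n) with ‖g* - G*_{n,g*}‖_{L^∞([-1,1])} ≤ C n^{-α}. -/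
open Set

lemma sigmoid_pos (t : ℝ) : 0 < sigmoid t := by unfold sigmoid; positivity

lemma sigmoid_lt_one (t : ℝ) : sigmoid t < 1 := by
  unfold sigmoid
  rw [div_lt_one (by positivity)]
  linarith [Real.exp_pos (-t)]

lemma sigmoid_mono : Monotone sigmoid := by
  intro a b hab
  unfold sigmoid
  gcongr


lemma one_sub_sigmoid_le (t : ℝ) : 1 - sigmoid t ≤ Real.exp (-t) := by
  unfold sigmoid
  have h : (0:ℝ) < 1 + Real.exp (-t) := by positivity
  have : 1 - 1 / (1 + Real.exp (-t)) = Real.exp (-t) / (1 + Real.exp (-t)) := by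
    field_simp
    ring
  rw [this]
  exact div_le_self (Real.exp_pos _).le (by linarith [Real.exp_pos (-t)])

lemma sigmoid_le_exp (t : ℝ) : sigmoid t ≤ Real.exp t := by
  unfold sigmoid
  rw [div_le_iff₀ (by positivity)]
  have h1 : Real.exp t * Real.exp (-t) = 1 := by
    rw [← Real.exp_add]; simp
  nlinarith [Real.exp_pos t, Real.exp_pos (-t)]

lemma phi_nonneg (t : ℝ) : 0 ≤ phi t := by
  have := sigmoid_mono (show t - 1 ≤ t + 1 by linarith)
  unfold phi; linarith

lemma phi_le (t : ℝ) : phi t ≤ Real.exp 1 / 2 * Real.exp (-|t|) := by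
  unfold phi
  rcases le_or_gt 0 t with h | h
  · rw [abs_of_nonneg h]
    have h1 : 1 - sigmoid (t - 1) ≤ Real.exp (-(t-1)) := one_sub_sigmoid_le _
    have h2 : sigmoid (t + 1) < 1 := sigmoid_lt_one _
    have h3 : Real.exp (-(t-1)) = Real.exp 1 * Real.exp (-t) := by
      rw [← Real.exp_add]; ring_nf
    nlinarith
  · rw [abs_of_neg h]
    have h1 : sigmoid (t + 1) ≤ Real.exp (t + 1) := sigmoid_le_exp _
    have h2 : 0 < sigmoid (t - 1) := sigmoid_pos _
    have h3 : Real.exp (t + 1) = Real.exp 1 * Real.exp (- -t) := by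
      rw [← Real.exp_add]; ring_nf
    nlinarith

lemma one_add_mul_exp (d : ℝ) (hd : 0 ≤ d) :
    (1 + d) * Real.exp (-d) ≤ 2 * Real.exp (-(d/2)) := by
  have h1 : 1 + d ≤ 2 * Real.exp (d/2) := by
    have := Real.add_one_le_exp (d/2)
    nlinarith
  have h2 : Real.exp (d/2) * Real.exp (-d) = Real.exp (-(d/2)) := by
    rw [← Real.exp_add]; ring_nf
  calc (1 + d) * Real.exp (-d) ≤ 2 * Real.exp (d/2) * Real.exp (-d) := by
        nlinarith [Real.exp_pos (-d)]
    _ = 2 * Real.exp (-(d/2)) := by rw [mul_assoc, h2]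

lemma geom_tail (M : ℕ) : ∑ i ∈ Finset.range M, (Real.exp (-(1/2:ℝ)))^i
    ≤ (1 - Real.exp (-(1/2:ℝ)))⁻¹ := by
  have hr0 : (0:ℝ) ≤ Real.exp (-(1/2:ℝ)) := (Real.exp_pos _).le
  have hr1 : Real.exp (-(1/2:ℝ)) < 1 := by
    calc Real.exp (-(1/2:ℝ)) < Real.exp 0 := Real.exp_lt_exp.2 (by norm_num)
      _ = 1 := Real.exp_zero
  have hs := summable_geometric_of_lt_one hr0 hr1
  have h := Summable.sum_le_tsum (Finset.range M) (fun i _ => pow_nonneg hr0 i) hs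
  rwa [tsum_geometric_of_lt_one hr0 hr1] at h

lemma sum_exp_half (N : ℕ) (x : ℝ) (hx : 0 ≤ x) :
    ∑ k ∈ Finset.range (N+1), Real.exp (-(|x - k|/2))
      ≤ 2 * (1 - Real.exp (-(1/2:ℝ)))⁻¹ := by
  set r : ℝ := Real.exp (-(1/2:ℝ)) with hr
  set M := ⌊x⌋₊ with hM
  have hxM : (M:ℝ) ≤ x := Nat.floor_le hx
  have hxM' : x < M + 1 := Nat.lt_floor_add_one x
  have hpow : ∀ (d : ℝ) (m : ℕ), (m:ℝ) ≤ d → Real.exp (-(d/2)) ≤ r ^ m := by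
    intro d m h
    rw [hr, ← Real.exp_nat_mul]
    exact Real.exp_le_exp.2 (by linarith)
  rw [← Finset.sum_filter_add_sum_filter_not (Finset.range (N+1)) (fun k => k ≤ M)]
  have hA : ∑ k ∈ (Finset.range (N+1)).filter (fun k => k ≤ M), Real.exp (-(|x - k|/2))
      ≤ (1 - r)⁻¹ := by
    calc ∑ k ∈ (Finset.range (N+1)).filter (fun k => k ≤ M), Real.exp (-(|x - k|/2))
        ≤ ∑ k ∈ Finset.range (M+1), Real.exp (-(|x - k|/2)) := by
          apply Finset.sum_le_sum_of_subset_of_nonneg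
          · intro k hk
            simp only [Finset.mem_filter, Finset.mem_range] at hk ⊢
            omega
          · intro k _ _; positivity
      _ ≤ ∑ k ∈ Finset.range (M+1), r ^ (M - k) := by
          apply Finset.sum_le_sum
          intro k hk
          simp only [Finset.mem_range] at hk
          have hkM : k ≤ M := Nat.lt_succ_iff.mp hk
          apply hpow
          have hk' : (k:ℝ) ≤ M := by exact_mod_cast hkM
          rw [abs_of_nonneg (by linarith : (0:ℝ) ≤ x - k)]
          push_cast [Nat.cast_sub hkM]
          linarith
      _ = ∑ i ∈ Finset.range (M+1), r ^ i := by
          rw [← Finset.sum_range_reflect]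
          apply Finset.sum_congr rfl
          intro i hi
          simp only [Finset.mem_range] at hi
          congr 1
          omega
      _ ≤ (1 - r)⁻¹ := geom_tail (M+1)
  have hB : ∑ k ∈ (Finset.range (N+1)).filter (fun k => ¬ k ≤ M), Real.exp (-(|x - k|/2))
      ≤ (1 - r)⁻¹ := by
    calc ∑ k ∈ (Finset.range (N+1)).filter (fun k => ¬ k ≤ M), Real.exp (-(|x - k|/2))
        ≤ ∑ k ∈ Finset.Ico (M+1) (N+1), Real.exp (-(|x - k|/2)) := by
          apply Finset.sum_le_sum_of_subset_of_nonneg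
          · intro k hk
            simp only [Finset.mem_filter, Finset.mem_range, Finset.mem_Ico] at hk ⊢
            omega
          · intro k _ _; positivity
      _ ≤ ∑ k ∈ Finset.Ico (M+1) (N+1), r ^ (k - (M+1)) := by
          apply Finset.sum_le_sum
          intro k hk
          simp only [Finset.mem_Ico] at hk
          apply hpow
          have h1 : (M:ℝ) + 1 ≤ k := by exact_mod_cast hk.1
          rw [abs_of_nonpos (by linarith : x - (k:ℝ) ≤ 0)]
          push_cast [Nat.cast_sub hk.1]
          linarith
      _ = ∑ i ∈ Finset.range (N+1 - (M+1)), r ^ i := by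
          rw [Finset.sum_Ico_eq_sum_range]
          apply Finset.sum_congr rfl
          intro i _
          congr 1
          omega
      _ ≤ (1 - r)⁻¹ := geom_tail _
  linarith

lemma sum_phi_eq (N : ℕ) (x : ℝ) :
    ∑ k ∈ Finset.range (N+1), phi (x - k) =
      (sigmoid (x+1) - sigmoid (x - N) + (sigmoid x - sigmoid (x - N - 1))) / 2 := by
  have key : ∑ k ∈ Finset.range (N+1),
      ((sigmoid (x + 1 - k) - sigmoid (x + 1 - ((k:ℝ)+1)))
        + (sigmoid (x - k) - sigmoid (x - ((k:ℝ)+1)))) =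
      ((fun j : ℕ => sigmoid (x+1-j)) 0 - (fun j : ℕ => sigmoid (x+1-j)) (N+1))
        + ((fun j : ℕ => sigmoid (x-j)) 0 - (fun j : ℕ => sigmoid (x-j)) (N+1)) := by
    rw [← Finset.sum_range_sub' (fun j : ℕ => sigmoid (x+1-j)) (N+1),
        ← Finset.sum_range_sub' (fun j : ℕ => sigmoid (x-j)) (N+1),
        ← Finset.sum_add_distrib]
    apply Finset.sum_congr rfl
    intro k _
    push_cast
    ring_nf
  have step : ∑ k ∈ Finset.range (N+1), phi (x - k) =
      (∑ k ∈ Finset.range (N+1),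
      ((sigmoid (x + 1 - k) - sigmoid (x + 1 - ((k:ℝ)+1)))
        + (sigmoid (x - k) - sigmoid (x - ((k:ℝ)+1))))) / 2 := by
    rw [Finset.sum_div]
    apply Finset.sum_congr rfl
    intro k _
    have e1 : x + 1 - (k:ℝ) = (x - k) + 1 := by ring
    have e2 : x + 1 - ((k:ℝ)+1) = x - k := by ring
    have e3 : x - ((k:ℝ)+1) = (x - k) - 1 := by ring
    rw [e1, e2, e3]
    unfold phi
    ring
  rw [step, key]
  simp only []
  have e1 : x + 1 - ((0:ℕ):ℝ) = x + 1 := by norm_num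
  have e2 : x + 1 - ((N+1:ℕ):ℝ) = x - N := by push_cast; ring
  have e3 : x - ((0:ℕ):ℝ) = x := by norm_num
  have e4 : x - ((N+1:ℕ):ℝ) = x - N - 1 := by push_cast; ring
  rw [e1, e2, e3, e4]

set_option maxHeartbeats 1000000 in
theorem direct_approximation (α c : ℝ) (hα : 0 < α) (hα1 : α ≤ 1) (hc : 0 < c)
    (g : ℝ → ℝ)
    (hLip : ∀ t ∈ Icc (-1 : ℝ) 1, ∀ t' ∈ Icc (-1 : ℝ) 1,
      |g t - g t'| ≤ c * |t - t'| ^ α) :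
    ∃ C : ℝ, 0 < C ∧ ∀ n : ℕ, 1 ≤ n → ∀ t ∈ Icc (-1 : ℝ) 1,
      |g t - Gop n g t| ≤ C * (n : ℝ) ^ (-α) := by
  set r : ℝ := Real.exp (-(1/2:ℝ)) with hrdef
  have hr1 : r < 1 := by
    calc r < Real.exp 0 := Real.exp_lt_exp.2 (by norm_num)
      _ = 1 := Real.exp_zero
  have hr0 : (0:ℝ) < r := Real.exp_pos _
  have h1r : (0:ℝ) < 1 - r := by linarith
  set Mg : ℝ := |g 0| + c with hMgdef
  have hMg0 : 0 ≤ Mg := by positivity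
  set A : ℝ := c * Real.exp 1 * (2 * (1 - r)⁻¹) with hAdef
  have hA0 : 0 < A := by
    have : (0:ℝ) < (1 - r)⁻¹ := inv_pos.2 h1r
    have := Real.exp_pos 1
    positivity
  refine ⟨A + 2 * Mg + 1, by linarith, ?_⟩
  intro n hn t ht
  obtain ⟨ht1, ht2⟩ := ht
  have hn0 : (0:ℝ) < n := by exact_mod_cast hn
  have hn1 : (1:ℝ) ≤ n := by exact_mod_cast hn
  set x : ℝ := (n:ℝ) * t + 2 * n with hxdef
  have hx1 : (n:ℝ) ≤ x := by nlinarith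
  have hx3 : x ≤ 3 * n := by nlinarith
  have hx0 : (0:ℝ) ≤ x := by linarith
  have hP0 : (0:ℝ) ≤ (n:ℝ) ^ (-α) := Real.rpow_nonneg hn0.le _
  -- bound on g
  have hgb : ∀ s ∈ Icc (-1:ℝ) 1, |g s| ≤ Mg := by
    intro s hs
    have h := hLip s hs 0 (by constructor <;> norm_num)
    have habs : |s - 0| ^ α ≤ 1 := by
      rw [sub_zero]
      exact Real.rpow_le_one (abs_nonneg s) (abs_le.2 ⟨hs.1, hs.2⟩) hα.le
    have h2 : |g s - g 0| ≤ c := by nlinarith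
    calc |g s| = |(g s - g 0) + g 0| := by ring_nf
      _ ≤ |g s - g 0| + |g 0| := abs_add_le _ _
      _ ≤ Mg := by rw [hMgdef]; linarith
  -- per-term bound
  have hterm : ∀ k ∈ Finset.range (4*n+1),
      |g t - beta n g k| * phi (x - k)
        ≤ (c * Real.exp 1 * (n:ℝ)^(-α)) * Real.exp (-(|x - (k:ℝ)|/2)) := by
    intro k hk
    simp only [Finset.mem_range] at hk
    have hBk : ∃ ξ : ℝ, ξ ∈ Icc (-1:ℝ) 1 ∧ beta n g k = g ξ ∧ |t - ξ| ≤ |x - (k:ℝ)| / n := by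
      by_cases h1 : k ≤ n - 1
      · refine ⟨-1, by constructor <;> norm_num, by simp [beta, h1], ?_⟩
        have hk' : (k:ℝ) ≤ (n:ℝ) - 1 := by
          have hkn : k + 1 ≤ n := by omega
          have : ((k:ℝ) + 1) ≤ n := by exact_mod_cast hkn
          linarith
        have habs : |t - (-1)| = t + 1 := by rw [abs_of_nonneg (by linarith)]; ring
        rw [habs, le_div_iff₀ hn0]
        have hle : x - k ≤ |x - (k:ℝ)| := le_abs_self _
        nlinarith
      · by_cases h2 : k ≤ 3 * n
        · have hkn : n ≤ k := by omega
          have hknR : (n:ℝ) ≤ k := by exact_mod_cast hkn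
          have hk3R : (k:ℝ) ≤ 3 * n := by exact_mod_cast h2
          refine ⟨((k:ℝ) - 2*n)/n, ?_, by simp [beta, h1, h2], ?_⟩
          · constructor
            · rw [le_div_iff₀ hn0]; push_cast; linarith
            · rw [div_le_iff₀ hn0]; push_cast; linarith
          · have e1 : t - ((k:ℝ) - 2*n)/n = (x - k)/n := by
              rw [hxdef]; field_simp; ring
            rw [e1, abs_div, abs_of_pos hn0]
        · push_neg at h2
          have hk3 : 3*n + 1 ≤ k := h2
          have hk3R : 3*(n:ℝ) + 1 ≤ k := by exact_mod_cast hk3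
          refine ⟨1, by constructor <;> norm_num, ?_, ?_⟩
          · unfold beta
            rw [if_neg h1, if_neg (by omega : ¬ k ≤ 3*n)]
          have habs : |t - 1| = 1 - t := by rw [abs_of_nonpos (by linarith)]; ring
          rw [habs, le_div_iff₀ hn0]
          have hle : (k:ℝ) - x ≤ |x - (k:ℝ)| := by
            rw [abs_sub_comm]; exact le_abs_self _
          nlinarith
    obtain ⟨ξ, hmem, hbe, hdist⟩ := hBk
    have h1 : |g t - beta n g k| ≤ c * (|x - (k:ℝ)|/n) ^ α := by
      rw [hbe]
      calc |g t - g ξ| ≤ c * |t - ξ| ^ α := hLip t ⟨ht1, ht2⟩ ξ hmem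
        _ ≤ c * (|x - (k:ℝ)|/n) ^ α := by
            apply mul_le_mul_of_nonneg_left _ hc.le
            exact Real.rpow_le_rpow (abs_nonneg _) hdist hα.le
    have h2 : (|x - (k:ℝ)|/n) ^ α ≤ (1 + |x - (k:ℝ)|) * (n:ℝ)^(-α) := by
      rw [Real.div_rpow (abs_nonneg _) hn0.le, Real.rpow_neg hn0.le, div_eq_mul_inv]
      apply mul_le_mul_of_nonneg_right _ (inv_nonneg.2 (Real.rpow_nonneg hn0.le α))
      rcases le_or_gt (|x - (k:ℝ)|) 1 with h | h
      · have := Real.rpow_le_one (abs_nonneg (x - (k:ℝ))) h hα.le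
        linarith [abs_nonneg (x - (k:ℝ))]
      · calc |x - (k:ℝ)| ^ α ≤ |x - (k:ℝ)| ^ (1:ℝ) :=
              Real.rpow_le_rpow_of_exponent_le h.le hα1
          _ = |x - (k:ℝ)| := Real.rpow_one _
          _ ≤ 1 + |x - (k:ℝ)| := by linarith
    have h12 : |g t - beta n g k| ≤ c * ((1 + |x - (k:ℝ)|) * (n:ℝ)^(-α)) :=
      h1.trans (mul_le_mul_of_nonneg_left h2 hc.le)
    have h3 := phi_le (x - (k:ℝ))
    have h4 := one_add_mul_exp (|x - (k:ℝ)|) (abs_nonneg _)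
    have hnn : 0 ≤ c * ((1 + |x - (k:ℝ)|) * (n:ℝ)^(-α)) := by
      have := abs_nonneg (x - (k:ℝ))
      have := hP0
      positivity
    have hemul : 0 ≤ c * (n:ℝ)^(-α) * (Real.exp 1 / 2) := by positivity
    calc |g t - beta n g k| * phi (x - k)
        ≤ (c * ((1 + |x - (k:ℝ)|) * (n:ℝ)^(-α))) * (Real.exp 1 / 2 * Real.exp (-|x - (k:ℝ)|)) :=
          mul_le_mul h12 h3 (phi_nonneg _) hnn
      _ = c * (n:ℝ)^(-α) * (Real.exp 1 / 2) * ((1 + |x - (k:ℝ)|) * Real.exp (-|x - (k:ℝ)|)) := by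
          ring
      _ ≤ c * (n:ℝ)^(-α) * (Real.exp 1 / 2) * (2 * Real.exp (-(|x - (k:ℝ)|/2))) :=
          mul_le_mul_of_nonneg_left h4 hemul
      _ = (c * Real.exp 1 * (n:ℝ)^(-α)) * Real.exp (-(|x - (k:ℝ)|/2)) := by ring
  -- sum bound
  set S : ℝ := ∑ k ∈ Finset.range (4*n+1), phi (x - k) with hSdef
  have hsum1 : |∑ k ∈ Finset.range (4*n+1), (g t - beta n g k) * phi (x - k)|
      ≤ A * (n:ℝ)^(-α) := by
    calc |∑ k ∈ Finset.range (4*n+1), (g t - beta n g k) * phi (x - k)|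
        ≤ ∑ k ∈ Finset.range (4*n+1), |(g t - beta n g k) * phi (x - k)| :=
          Finset.abs_sum_le_sum_abs _ _
      _ = ∑ k ∈ Finset.range (4*n+1), |g t - beta n g k| * phi (x - k) := by
          apply Finset.sum_congr rfl
          intro k _
          rw [abs_mul, abs_of_nonneg (phi_nonneg _)]
      _ ≤ ∑ k ∈ Finset.range (4*n+1),
            (c * Real.exp 1 * (n:ℝ)^(-α)) * Real.exp (-(|x - (k:ℝ)|/2)) :=
          Finset.sum_le_sum hterm
      _ = (c * Real.exp 1 * (n:ℝ)^(-α)) *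
            ∑ k ∈ Finset.range (4*n+1), Real.exp (-(|x - (k:ℝ)|/2)) := by
          rw [Finset.mul_sum]
      _ ≤ (c * Real.exp 1 * (n:ℝ)^(-α)) * (2 * (1 - r)⁻¹) := by
          apply mul_le_mul_of_nonneg_left (sum_exp_half (4*n) x hx0)
          have := Real.exp_pos 1
          positivity
      _ = A * (n:ℝ)^(-α) := by rw [hAdef]; ring
  -- tail bound
  have hS := sum_phi_eq (4*n) x
  rw [← hSdef] at hS
  have hcast : ((4*n : ℕ):ℝ) = 4*(n:ℝ) := by push_cast; ring
  rw [hcast] at hS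
  have hS1 : 0 ≤ 1 - S := by
    rw [hS]
    linarith [sigmoid_lt_one (x+1), sigmoid_lt_one x,
      sigmoid_pos (x - 4*(n:ℝ)), sigmoid_pos (x - 4*(n:ℝ) - 1)]
  have hS2 : 1 - S ≤ 2 * Real.exp (-(n:ℝ)) := by
    rw [hS]
    have e1 : 1 - sigmoid (x+1) ≤ Real.exp (-(n:ℝ)) :=
      (one_sub_sigmoid_le _).trans (Real.exp_le_exp.2 (by linarith))
    have e2 : 1 - sigmoid x ≤ Real.exp (-(n:ℝ)) :=
      (one_sub_sigmoid_le _).trans (Real.exp_le_exp.2 (by linarith))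
    have e3 : sigmoid (x - 4*(n:ℝ)) ≤ Real.exp (-(n:ℝ)) :=
      (sigmoid_le_exp _).trans (Real.exp_le_exp.2 (by linarith))
    have e4 : sigmoid (x - 4*(n:ℝ) - 1) ≤ Real.exp (-(n:ℝ)) :=
      (sigmoid_le_exp _).trans (Real.exp_le_exp.2 (by linarith))
    linarith
  have hexp : Real.exp (-(n:ℝ)) ≤ (n:ℝ)^(-α) := by
    have h1 : Real.exp (-(n:ℝ)) ≤ 1/(n:ℝ) := by
      rw [Real.exp_neg, one_div]
      apply inv_anti₀ hn0
      linarith [Real.add_one_le_exp (n:ℝ)]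
    have h2 : 1/(n:ℝ) = (n:ℝ)^(-(1:ℝ)) := by rw [Real.rpow_neg_one, one_div]
    rw [h2] at h1
    exact h1.trans (Real.rpow_le_rpow_of_exponent_le hn1 (by linarith))
  -- decomposition
  have hdecomp : g t - Gop n g t =
      (∑ k ∈ Finset.range (4*n+1), (g t - beta n g k) * phi (x - k)) + g t * (1 - S) := by
    have harg : ∀ k ∈ Finset.range (4*n+1),
        beta n g k * phi ((n:ℝ) * t - (k:ℝ) + 2 * n) = beta n g k * phi (x - k) := by
      intro k _
      congr 2
      rw [hxdef]; ring
    unfold Gop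
    rw [Finset.sum_congr rfl harg]
    have expand : ∑ k ∈ Finset.range (4*n+1), (g t - beta n g k) * phi (x - k)
        = g t * (∑ k ∈ Finset.range (4*n+1), phi (x - k))
          - ∑ k ∈ Finset.range (4*n+1), beta n g k * phi (x - k) := by
      rw [Finset.mul_sum, ← Finset.sum_sub_distrib]
      apply Finset.sum_congr rfl
      intro k _
      ring
    rw [expand]
    ring
  -- finish
  calc |g t - Gop n g t|
      = |(∑ k ∈ Finset.range (4*n+1), (g t - beta n g k) * phi (x - k)) + g t * (1 - S)| := by
        rw [hdecomp]
    _ ≤ |∑ k ∈ Finset.range (4*n+1), (g t - beta n g k) * phi (x - k)| + |g t| * |1 - S| := by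
        refine (abs_add_le _ _).trans ?_
        rw [abs_mul]
    _ ≤ A * (n:ℝ)^(-α) + Mg * (2 * Real.exp (-(n:ℝ))) := by
        apply add_le_add hsum1
        apply mul_le_mul (hgb t ⟨ht1, ht2⟩) _ (abs_nonneg _) hMg0
        rw [abs_of_nonneg hS1]; exact hS2
    _ ≤ A * (n:ℝ)^(-α) + (2 * Mg) * (n:ℝ)^(-α) := by
        have : Mg * (2 * Real.exp (-(n:ℝ))) ≤ Mg * (2 * (n:ℝ)^(-α)) := by
          apply mul_le_mul_of_nonneg_left _ hMg0
          linarith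
        linarith
    _ ≤ (A + 2 * Mg + 1) * (n:ℝ)^(-α) := by nlinarith
end
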